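/- Let v(g₀, g₁, (fᵢ)) ∈ T_{(g₀,g₁)}G² be the 'net force' vector Σᵢ s_{tᵢ}((d_{(g₀,g₁)}γ_{tᵢ})^{-1}(Log_{γ_{tᵢ}(g₀,g₁)}(fᵢ))) with s_t(v,w) = ((1−t)²v, t²w). Then v ∘ L_h = dL_h ∘ v for all h ∈ G, where L_h denotes joint left translation on all arguments. -/

import Mathlib

/-!
The CCS geodesics and the connection logarithm are equivariant under left translation:
`γ_t(h g₀, h g₁) = h γ_t(g₀, g₁)` and `Log_{hg}(h f) = d L_h (Log_g f)`. Differentiating the first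
identity in either argument gives `∂γ_t(hg₀, hg₁) ∘ d L_h = d L_h ∘ ∂γ_t(g₀, g₁)`, so the inverse
partial differentials also intertwine `d L_h`, and linearity of `d L_h` carries this through the
weighted sums of the net-force vector.
-/

section

variable {E : Type*} [NormedAddCommGroup E] [NormedSpace ℝ E]
  {H : Type*} [TopologicalSpace H] (I : ModelWithCorners ℝ E H)
  {G : Type*} [TopologicalSpace G] [ChartedSpace H G] [Group G]

/-- Geodesic of the canonical Cartan–Schouten connection between `g₀` and `g₁`:
`γ(t; g₀, g₁) = g₀ · exp(t · log(g₀⁻¹ g₁))`, for abstract group exponential and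
logarithm. -/
def ccsGeodesic (expm : E → G) (logm : G → E) (t : ℝ) (g₀ g₁ : G) : G :=
  g₀ * expm (t • logm (g₀⁻¹ * g₁))

/-- Connection logarithm of the CCS connection: `Log_g(f) = d_e L_g (log(g⁻¹ f))`. -/
noncomputable def ccsLog [LieGroup I ((⊤ : ℕ∞) : WithTop ℕ∞) G] (logm : G → E) (g f : G) :
    TangentSpace I g :=
  mfderiv I I (fun x : G => g * x) (1 : G) (logm (g⁻¹ * f))

theorem ccsGeodesic_mul_left {K : Type*} [Group K] (expm : E → K) (logm : K → E) (t : ℝ)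
    (h g₀ g₁ : K) :
    ccsGeodesic expm logm t (h * g₀) (h * g₁) = h * ccsGeodesic expm logm t g₀ g₁ := by
  simp only [ccsGeodesic, mul_inv_rev, mul_assoc, inv_mul_cancel_left]

theorem ccsLog_mul_left [LieGroup I ((⊤ : ℕ∞) : WithTop ℕ∞) G] (logm : G → E) (h g f : G) :
    ccsLog I logm (h * g) (h * f) = mfderiv I I (h * ·) g (ccsLog I logm g f) := by
  have hcomp : (fun x : G => h * g * x) = (h * ·) ∘ (g * ·) := funext fun x => mul_assoc h g x
  rw [ccsLog, ccsLog, hcomp, mfderiv_comp 1 mdifferentiableAt_mul_left mdifferentiableAt_mul_left,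
    mfderiv_congr_point (mul_one g), show (h * g)⁻¹ * (h * f) = g⁻¹ * f by group]
  rfl

theorem sum_smul_eq_map_sum_smul {ι M M₂ : Type*} [Fintype ι] [AddCommMonoid M] [Module ℝ M]
    [AddCommMonoid M₂] [Module ℝ M₂] {L : M →ₗ[ℝ] M₂} {c : ι → ℝ} {u : ι → M₂} {w : ι → M}
    (huw : ∀ i, u i = L (w i)) : ∑ i, c i • u i = L (∑ i, c i • w i) := by
  simp only [huw, map_sum, map_smul]

theorem symm_mfderiv_mul_left_of_equivariant [ContMDiffMul I 1 G]
    {Φ Φ' : G → G} {h : G} (hΦ : ∀ y, Φ' (h * y) = h * Φ y) {x : G}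
    {D D' : E ≃L[ℝ] E} (hD : (D : E →L[ℝ] E) = mfderiv I I Φ x)
    (hD' : (D' : E →L[ℝ] E) = mfderiv I I Φ' (h * x)) (v : E) :
    D'.symm (mfderiv I I (h * ·) (Φ x) v) = mfderiv I I (h * ·) x (D.symm v) := by
  have hL : ∀ y : G, MDifferentiableAt I I (h * ·) y := fun _ => mdifferentiableAt_mul_left
  have chain : (D' : E →L[ℝ] E).comp (mfderiv I I (h * ·) x)
      = (mfderiv I I (h * ·) (Φ x)).comp (D : E →L[ℝ] E) := by
    have hΦx := mdifferentiableAt_of_isInvertible_mfderiv ⟨D, hD⟩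
    have hΦ'x := mdifferentiableAt_of_isInvertible_mfderiv ⟨D', hD'⟩
    have hcomp : mfderiv I I (Φ' ∘ (h * ·)) x = mfderiv I I ((h * ·) ∘ Φ) x := by
      rw [show Φ' ∘ (h * ·) = (h * ·) ∘ Φ from funext hΦ]
    rw [hD, hD']
    exact (mfderiv_comp x hΦ'x (hL x)).symm.trans (hcomp.trans (mfderiv_comp x (hL (Φ x)) hΦx))
  exact D'.symm_apply_eq.mpr <|
    (congrArg (mfderiv I I (h * ·) (Φ x)) (D.apply_symm_apply v)).symm.trans
      congr($chain (D.symm v)).symm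

theorem symm_ccsLog_mul_left_of_equivariant [LieGroup I ((⊤ : ℕ∞) : WithTop ℕ∞) G]
    (logm : G → E) {Φ Φ' : G → G} {h : G} (hΦ : ∀ y, Φ' (h * y) = h * Φ y) {x : G}
    {D D' : E ≃L[ℝ] E} (hD : (D : E →L[ℝ] E) = mfderiv I I Φ x)
    (hD' : (D' : E →L[ℝ] E) = mfderiv I I Φ' (h * x)) (f : G) :
    D'.symm (ccsLog I logm (Φ' (h * x)) (h * f))
      = mfderiv I I (h * ·) x (D.symm (ccsLog I logm (Φ x) f)) := by
  rw [hΦ, ccsLog_mul_left]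
  exact symm_mfderiv_mul_left_of_equivariant I hΦ hD hD' _

theorem stmt11 [LieGroup I ((⊤ : ℕ∞) : WithTop ℕ∞) G] (expm : E → G) (logm : G → E)
    (N : ℕ) (f : Fin N → G) (t : Fin N → ℝ)
    (g₀ g₁ h : G)
    (D₀ D₁ D₀' D₁' : Fin N → (E ≃L[ℝ] E))
    (hD₀ : ∀ i, (D₀ i : E →L[ℝ] E)
      = mfderiv I I (fun x : G => ccsGeodesic expm logm (t i) x g₁) g₀)
    (hD₁ : ∀ i, (D₁ i : E →L[ℝ] E)
      = mfderiv I I (fun y : G => ccsGeodesic expm logm (t i) g₀ y) g₁)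
    (hD₀' : ∀ i, (D₀' i : E →L[ℝ] E)
      = mfderiv I I (fun x : G => ccsGeodesic expm logm (t i) x (h * g₁)) (h * g₀))
    (hD₁' : ∀ i, (D₁' i : E →L[ℝ] E)
      = mfderiv I I (fun y : G => ccsGeodesic expm logm (t i) (h * g₀) y) (h * g₁)) :
    (∑ i, (1 - t i) ^ 2 •
        (D₀' i).symm
          (ccsLog I logm (ccsGeodesic expm logm (t i) (h * g₀) (h * g₁)) (h * f i))
      = mfderiv I I (fun x : G => h * x) g₀
          (∑ i, (1 - t i) ^ 2 •
            (D₀ i).symm (ccsLog I logm (ccsGeodesic expm logm (t i) g₀ g₁) (f i)))) ∧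
    (∑ i, (t i) ^ 2 •
        (D₁' i).symm
          (ccsLog I logm (ccsGeodesic expm logm (t i) (h * g₀) (h * g₁)) (h * f i))
      = mfderiv I I (fun x : G => h * x) g₁
          (∑ i, (t i) ^ 2 •
            (D₁ i).symm (ccsLog I logm (ccsGeodesic expm logm (t i) g₀ g₁) (f i)))) := by
  refine ⟨sum_smul_eq_map_sum_smul fun i => ?_, sum_smul_eq_map_sum_smul fun i => ?_⟩
  · exact symm_ccsLog_mul_left_of_equivariant I logm
      (fun y => ccsGeodesic_mul_left expm logm (t i) h y g₁) (hD₀ i) (hD₀' i) (f i)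
  · exact symm_ccsLog_mul_left_of_equivariant I logm
      (fun y => ccsGeodesic_mul_left expm logm (t i) h g₀ y) (hD₁ i) (hD₁' i) (f i)

end
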